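/- arXiv:2305.06050 — 4 statements merged into one kernel-verified Lean document; each statement's English description precedes it below -/
import Mathlib

section
/- Let q be divisible by 4, let G = ⟨μ_1, μ_5⟩ acting on Z_q, and let j ≡ 1 (mod 4), 1 ≤ j < q/2. Then the orbits of G on the set of pairs {i, i+j} (i ∈ Z_q) are exactly three: { {i,i+j} : i ≡ 0 (mod 4) }, { {i,i+j} : i ≡ 2 (mod 4) }, and { {i,i+j} : i ≡ 1 or 3 (mod 4) }. -/
/-!
The group `⟨μ_1, μ_5⟩` is dihedral: it consists of the translations `i ↦ t + i` with
`t ∈ 4ℤ_q` and the reflections `i ↦ t − i` with `t ≡ 1 (mod 4)`. As `2j ≠ 0`, a corner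
`{a, a + j}` determines `a`, so the translation by `t` sends the corner at `a` to the corner at
`a + t` and the reflection `μ_t` sends it to the corner at `t − a − j`. With `j ≡ 1 (mod 4)`,
the corner at `a` therefore reaches the corner at `b` iff `b ≡ ±a (mod 4)`.
-/

/-- The reflection `μ_f : i ↦ f − i` of `ℤ/qℤ`. -/
def reflPerm (q : ℕ) (f : ZMod q) : Equiv.Perm (ZMod q) := Equiv.subLeft f

/-- The `j`-corner `{i, i+j}` in `ℤ/qℤ`, as an unordered pair. -/
def corner (q j : ℕ) (i : ZMod q) : Sym2 (ZMod q) := s(i, i + (j : ZMod q))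

section

variable {A : Type*} [AddCommGroup A]

theorem mem_closure_subLeft_pair_iff {c d : A} {g : Equiv.Perm A} :
    g ∈ Subgroup.closure {Equiv.subLeft c, Equiv.subLeft d} ↔
      ∃ t ∈ AddSubgroup.zmultiples (d - c),
        g = Equiv.addLeft t ∨ g = Equiv.subLeft (c + t) := by
  constructor
  · intro hg
    induction hg using Subgroup.closure_induction with
    | mem g hg =>
      rcases hg with rfl | rfl
      · exact ⟨0, zero_mem _, Or.inr (by rw [add_zero])⟩
      · exact ⟨d - c, AddSubgroup.mem_zmultiples _, Or.inr (by rw [add_sub_cancel])⟩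
    | one => exact ⟨0, zero_mem _, Or.inl (by ext; simp)⟩
    | mul g h _ _ ihg ihh =>
      obtain ⟨t, ht, rfl | rfl⟩ := ihg <;> obtain ⟨s, hs, rfl | rfl⟩ := ihh
      · exact ⟨t + s, add_mem ht hs, Or.inl (by ext; simp [Equiv.Perm.mul_apply])⟩
      · exact ⟨t + s, add_mem ht hs, Or.inr (by ext; simp [Equiv.Perm.mul_apply]; abel)⟩
      · exact ⟨t - s, sub_mem ht hs, Or.inr (by ext; simp [Equiv.Perm.mul_apply]; abel)⟩
      · exact ⟨t - s, sub_mem ht hs, Or.inl (by ext; simp [Equiv.Perm.mul_apply]; abel)⟩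
    | inv g _ ihg =>
      obtain ⟨t, ht, rfl | rfl⟩ := ihg
      · exact ⟨-t, neg_mem ht, Or.inl (by ext; simp)⟩
      · exact ⟨t, ht, Or.inr (by ext; simp; abel)⟩
  · have hc : Equiv.subLeft c ∈ Subgroup.closure {Equiv.subLeft c, Equiv.subLeft d} :=
      Subgroup.subset_closure (by simp)
    have hd : Equiv.subLeft d ∈ Subgroup.closure {Equiv.subLeft c, Equiv.subLeft d} :=
      Subgroup.subset_closure (by simp)
    have htrans : ∀ n : ℤ, Equiv.addLeft (n • (d - c)) ∈
        Subgroup.closure {Equiv.subLeft c, Equiv.subLeft d} := by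
      intro n
      rw [← Equiv.zsmul_addLeft, show Equiv.addLeft (d - c) = Equiv.subLeft d * Equiv.subLeft c by
        ext; simp [Equiv.Perm.mul_apply]; abel]
      exact zpow_mem (mul_mem hd hc) n
    rintro ⟨t, ⟨n, rfl⟩, rfl | rfl⟩
    · exact htrans n
    · rw [show Equiv.subLeft (c + n • (d - c)) =
          Equiv.addLeft (n • (d - c)) * Equiv.subLeft c by ext; simp [Equiv.Perm.mul_apply]; abel]
      exact mul_mem (htrans n) hc

theorem sym2_pair_add_eq_pair_add_iff {j : A} (hj : j + j ≠ 0) {a b : A} :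
    s(a, a + j) = s(b, b + j) ↔ a = b := by
  refine ⟨fun h => ?_, fun h => h ▸ rfl⟩
  rcases Sym2.eq_iff.1 h with ⟨hab, -⟩ | ⟨hab, hba⟩
  · exact hab
  · rw [hab, add_assoc, add_eq_left] at hba
    exact absurd hba hj

theorem exists_mem_closure_subLeft_pair_map_eq_iff {c d j : A} (hj : j + j ≠ 0) (a b : A) :
    (∃ g ∈ Subgroup.closure {Equiv.subLeft c, Equiv.subLeft d},
        Sym2.map (⇑g) s(a, a + j) = s(b, b + j)) ↔
      b - a ∈ AddSubgroup.zmultiples (d - c) ∨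
        a + b + j - c ∈ AddSubgroup.zmultiples (d - c) := by
  have map_addLeft : ∀ t, Sym2.map (Equiv.addLeft t) s(a, a + j) = s(t + a, t + a + j) := by
    intro t; rw [add_assoc]; rfl
  have map_subLeft : ∀ t, Sym2.map (Equiv.subLeft t) s(a, a + j) =
      s(t - a - j, t - a - j + j) := by
    intro t; rw [sub_add_cancel, Sym2.eq_swap, sub_sub]; rfl
  simp_rw [mem_closure_subLeft_pair_iff]
  constructor
  · rintro ⟨g, ⟨t, ht, rfl | rfl⟩, hmap⟩
    · rw [map_addLeft, sym2_pair_add_eq_pair_add_iff hj] at hmap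
      left; rwa [← hmap, add_sub_cancel_right]
    · rw [map_subLeft, sym2_pair_add_eq_pair_add_iff hj] at hmap
      right; rwa [← hmap, show a + (c + t - a - j) + j - c = t by abel]
  · rintro (h | h)
    · exact ⟨_, ⟨b - a, h, Or.inl rfl⟩, by rw [map_addLeft, sub_add_cancel]⟩
    · refine ⟨_, ⟨a + b + j - c, h, Or.inr rfl⟩, ?_⟩
      rw [map_subLeft, show c + (a + b + j - c) - a - j = b by abel]

end

namespace ZMod

theorem val_castHom_eq_val_mod {n m : ℕ} [NeZero m] (h : n ∣ m) (x : ZMod m) :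
    (castHom h (ZMod n) x).val = x.val % n := by
  rw [castHom_apply, cast_eq_val, val_natCast]

theorem mem_zmultiples_natCast_iff_castHom_eq_zero {n m : ℕ} (h : n ∣ m) (x : ZMod m) :
    x ∈ AddSubgroup.zmultiples (n : ZMod m) ↔ castHom h (ZMod n) x = 0 := by
  constructor
  · rintro ⟨l, rfl⟩
    rw [map_zsmul, map_natCast, natCast_self, smul_zero]
  · intro hx
    obtain ⟨k, rfl⟩ := intCast_surjective x
    rw [map_intCast, intCast_zmod_eq_zero_iff_dvd] at hx
    obtain ⟨l, rfl⟩ := hx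
    exact ⟨l, by push_cast; ring⟩

theorem natCast_add_self_ne_zero {j q : ℕ} (hj : 0 < j) (hjq : 2 * j < q) :
    (j : ZMod q) + j ≠ 0 := by
  rw [← Nat.cast_add, Ne, natCast_eq_zero_iff]
  intro hdvd
  have := Nat.le_of_dvd (by omega) hdvd
  omega

theorem eq_or_add_eq_zero_iff_val_four (α β : ZMod 4) :
    (β = α ∨ α + β = 0) ↔
      (α.val = 0 ∧ β.val = 0) ∨ (α.val = 2 ∧ β.val = 2) ∨
        ((α.val = 1 ∨ α.val = 3) ∧ (β.val = 1 ∨ β.val = 3)) := by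
  revert α β; decide

end ZMod

theorem three_orbits_on_corners_general (q j : ℕ) (hq : 4 ∣ q)
    (hj : j % 4 = 1) (hj2 : j < q / 2) :
    ∀ a b : ZMod q,
      (∃ g ∈ Subgroup.closure ({reflPerm q 1, reflPerm q 5} : Set (Equiv.Perm (ZMod q))),
          Sym2.map (⇑g) (corner q j a) = corner q j b) ↔
        ((a.val % 4 = 0 ∧ b.val % 4 = 0) ∨
          (a.val % 4 = 2 ∧ b.val % 4 = 2) ∨
          ((a.val % 4 = 1 ∨ a.val % 4 = 3) ∧ (b.val % 4 = 1 ∨ b.val % 4 = 3))) := by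
  intro a b
  have : NeZero q := ⟨by omega⟩
  have hj4 : ZMod.castHom hq (ZMod 4) j = 1 := by
    rw [map_natCast, ← ZMod.natCast_mod, hj, Nat.cast_one]
  have h2j : (j : ZMod q) + j ≠ 0 := ZMod.natCast_add_self_ne_zero (by omega) (by omega)
  have h51 : (5 : ZMod q) - 1 = ((4 : ℕ) : ZMod q) := by norm_num
  rw [← ZMod.val_castHom_eq_val_mod hq a, ← ZMod.val_castHom_eq_val_mod hq b,
    ← ZMod.eq_or_add_eq_zero_iff_val_four]
  unfold reflPerm corner
  rw [exists_mem_closure_subLeft_pair_map_eq_iff h2j, h51,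
    ZMod.mem_zmultiples_natCast_iff_castHom_eq_zero hq,
    ZMod.mem_zmultiples_natCast_iff_castHom_eq_zero hq]
  rw [map_sub, map_sub, map_add, map_add, hj4, map_one, sub_eq_zero, add_sub_cancel_right]

/-- For `4 ∣ q`, `G = ⟨μ_1, μ_5⟩` and `j ≡ 1 (mod 4)` with `1 ≤ j < q/2`, the orbits of
`G` on the pairs `{i, i+j}` are exactly three: those with `i ≡ 0 (mod 4)`, those with
`i ≡ 2 (mod 4)`, and those with `i ≡ 1` or `3 (mod 4)`. -/
theorem three_orbits_on_corners (q j : ℕ) (hq0 : 0 < q) (hq : 4 ∣ q)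
    (hj : j % 4 = 1) (hj1 : 1 ≤ j) (hj2 : j < q / 2) :
    ∀ a b : ZMod q,
      (∃ g ∈ Subgroup.closure ({reflPerm q 1, reflPerm q 5} : Set (Equiv.Perm (ZMod q))),
          Sym2.map (⇑g) (corner q j a) = corner q j b) ↔
        ((a.val % 4 = 0 ∧ b.val % 4 = 0) ∨
          (a.val % 4 = 2 ∧ b.val % 4 = 2) ∨
          ((a.val % 4 = 1 ∨ a.val % 4 = 3) ∧ (b.val % 4 = 1 ∨ b.val % 4 = 3))) :=
  three_orbits_on_corners_general q j hq hj hj2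
end

section
/- Let q ≡ 0 (mod 4) and j ≡ 2 (mod 4), j < q/2, and let L = { {i, i+j} : i mod 4 ∈ {0,3} } be the standard even local corneration in Z_q. Then the subgroup of the dihedral group ⟨ρ, μ_0⟩ (of order 2q, acting on Z_q) preserving L contains ρ^4 and μ_1 and μ_{j−1}, and acts transitively on L. -/
/-- The rotation `ρ : i ↦ i + 1` of `ℤ/qℤ`. -/
def rotPerm (q : ℕ) : Equiv.Perm (ZMod q) := Equiv.addRight 1

/-- The standard even local corneration `L = { {i, i+j} : i mod 4 ∈ {0,3} }` in `ℤ/qℤ`. -/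
def stdEvenL (q j : ℕ) : Set (Sym2 (ZMod q)) :=
  {c | ∃ a : ZMod q, (a.val % 4 = 0 ∨ a.val % 4 = 3) ∧ c = s(a, a + (j : ZMod q))}

lemma rotPow_apply (q n : ℕ) (x : ZMod q) : ((rotPerm q) ^ n) x = x + n := by
  induction n with
  | zero => simp
  | succ n ih =>
    rw [pow_succ', Equiv.Perm.mul_apply, ih]
    simp only [rotPerm, Equiv.coe_addRight]
    push_cast
    ring

lemma reflPerm_apply (q : ℕ) (t x : ZMod q) : reflPerm q t x = t - x := rfl

/-- For `4 ∣ q` and `j ≡ 2 (mod 4)`, `j < q/2`: the subgroup of the dihedral group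
`⟨ρ, μ_0⟩` preserving the standard even local corneration contains `ρ⁴`, `μ_1` and
`μ_{j−1}`, and acts transitively on the corneration. -/
theorem stabilizer_of_standard_even_corneration (q j : ℕ) (hq0 : 0 < q) (hq : 4 ∣ q)
    (hj : j % 4 = 2) (hj1 : 2 ≤ j) (hj2 : j < q / 2) :
    (∀ c ∈ stdEvenL q j, Sym2.map (⇑((rotPerm q) ^ 4)) c ∈ stdEvenL q j) ∧
    (∀ c ∈ stdEvenL q j, Sym2.map (⇑(reflPerm q 1)) c ∈ stdEvenL q j) ∧
    (∀ c ∈ stdEvenL q j, Sym2.map (⇑(reflPerm q ((j : ZMod q) - 1))) c ∈ stdEvenL q j) ∧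
    (∀ c₁ ∈ stdEvenL q j, ∀ c₂ ∈ stdEvenL q j,
      ∃ g ∈ Subgroup.closure
          (({rotPerm q} ∪ Set.range (reflPerm q)) : Set (Equiv.Perm (ZMod q))),
        (∀ c ∈ stdEvenL q j, Sym2.map (⇑g) c ∈ stdEvenL q j) ∧
        Sym2.map (⇑g) c₁ = c₂) := by
  haveI : NeZero q := ⟨hq0.ne'⟩
  set f : ZMod q →+* ZMod 4 := ZMod.castHom hq (ZMod 4) with hfdef
  -- value of f in terms of val
  have hval : ∀ x : ZMod q, (f x).val = x.val % 4 := by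
    intro x
    have hx : ((x.val : ℕ) : ZMod q) = x := by simp [ZMod.natCast_val, ZMod.cast_id]
    conv_lhs => rw [← hx]
    rw [map_natCast, ZMod.val_natCast]
  have hcond : ∀ x : ZMod q, (x.val % 4 = 0 ∨ x.val % 4 = 3) ↔ (f x = 0 ∨ f x = 3) := by
    intro x
    rw [← hval]
    have : ∀ y : ZMod 4, (y.val = 0 ∨ y.val = 3) ↔ (y = 0 ∨ y = 3) := by decide
    exact this (f x)
  have hfj : f (j : ZMod q) = 2 := by
    rw [map_natCast]
    have : ((j % 4 : ℕ) : ZMod 4) = ((j : ℕ) : ZMod 4) := ZMod.natCast_mod j 4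
    rw [← this, hj]
    rfl
  -- membership via f
  have hmem : ∀ b : ZMod q, (f b = 0 ∨ f b = 3) → s(b, b + (j : ZMod q)) ∈ stdEvenL q j := by
    intro b hb
    exact ⟨b, (hcond b).2 hb, rfl⟩
  have hmem' : ∀ c ∈ stdEvenL q j, ∃ a : ZMod q, (f a = 0 ∨ f a = 3) ∧
      c = s(a, a + (j : ZMod q)) := by
    rintro c ⟨a, ha, rfl⟩
    exact ⟨a, (hcond a).1 ha, rfl⟩
  -- mapping formulas
  have hrotmap : ∀ (n : ℕ) (a : ZMod q),
      Sym2.map (⇑((rotPerm q) ^ n)) s(a, a + (j : ZMod q)) =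
        s(a + n, (a + n) + (j : ZMod q)) := by
    intro n a
    rw [Sym2.map_pair_eq, rotPow_apply, rotPow_apply]
    have : a + (j : ZMod q) + n = a + n + (j : ZMod q) := by ring
    rw [this]
  have hreflmap : ∀ (t a : ZMod q),
      Sym2.map (⇑(reflPerm q t)) s(a, a + (j : ZMod q)) =
        s(t - a - j, (t - a - j) + (j : ZMod q)) := by
    intro t a
    rw [Sym2.map_pair_eq, reflPerm_apply, reflPerm_apply]
    have h2 : t - a = (t - a - (j : ZMod q)) + j := by ring
    have h1 : t - (a + (j : ZMod q)) = t - a - j := by ring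
    conv_lhs => rw [h2, h1]
    exact Sym2.eq_swap
  -- rotation preservation
  have hrot : ∀ n : ℕ, f ((n : ℕ) : ZMod q) = 0 →
      ∀ c ∈ stdEvenL q j, Sym2.map (⇑((rotPerm q) ^ n)) c ∈ stdEvenL q j := by
    intro n hn c hc
    obtain ⟨a, ha, rfl⟩ := hmem' c hc
    rw [hrotmap]
    apply hmem
    rw [map_add, hn, add_zero]
    exact ha
  -- reflection preservation
  have hrefl : ∀ t : ZMod q, f t = 1 →
      ∀ c ∈ stdEvenL q j, Sym2.map (⇑(reflPerm q t)) c ∈ stdEvenL q j := by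
    intro t ht c hc
    obtain ⟨a, ha, rfl⟩ := hmem' c hc
    rw [hreflmap]
    apply hmem
    have hb : f (t - a - j) = 1 - f a - 2 := by rw [map_sub, map_sub, ht, hfj]
    rcases ha with ha | ha <;> rw [hb, ha] <;> [right; left] <;> decide
  have hf4 : f ((4 : ℕ) : ZMod q) = 0 := by rw [map_natCast]; decide
  have hf1 : f (1 : ZMod q) = 1 := map_one f
  have hfj1 : f ((j : ZMod q) - 1) = 1 := by rw [map_sub, hfj, map_one]; decide
  refine ⟨hrot 4 hf4, hrefl 1 hf1, hrefl _ hfj1, ?_⟩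
  -- transitivity
  have hrotclos : ∀ n : ℕ, (rotPerm q) ^ n ∈ Subgroup.closure
      (({rotPerm q} ∪ Set.range (reflPerm q)) : Set (Equiv.Perm (ZMod q))) :=
    by
      intro n
      apply pow_mem
      apply Subgroup.subset_closure
      left
      rfl
  have hreflclos : ∀ t : ZMod q, reflPerm q t ∈ Subgroup.closure
      (({rotPerm q} ∪ Set.range (reflPerm q)) : Set (Equiv.Perm (ZMod q))) :=
    by
      intro t
      apply Subgroup.subset_closure
      right
      exact ⟨t, rfl⟩
  intro c₁ hc₁ c₂ hc₂
  obtain ⟨a₁, ha₁, rfl⟩ := hmem' c₁ hc₁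
  obtain ⟨a₂, ha₂, rfl⟩ := hmem' c₂ hc₂
  by_cases hsame : f a₁ = f a₂
  · -- rotate by a₂ - a₁
    set n : ℕ := (a₂ - a₁).val with hn
    have hcast : ((n : ℕ) : ZMod q) = a₂ - a₁ := by
      simp [hn, ZMod.natCast_val, ZMod.cast_id]
    have hfn : f ((n : ℕ) : ZMod q) = 0 := by
      rw [hcast, map_sub, hsame, sub_self]
    refine ⟨(rotPerm q) ^ n, hrotclos n, hrot n hfn, ?_⟩
    rw [hrotmap, hcast]
    have : a₁ + (a₂ - a₁) = a₂ := by ring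
    rw [this]
  · -- reflect by 1, then rotate
    set b : ZMod q := 1 - a₁ - j with hbdef
    have hfb : f b = f a₂ := by
      have : f b = 1 - f a₁ - 2 := by rw [hbdef, map_sub, map_sub, map_one, hfj]
      rcases ha₁ with h1 | h1 <;> rcases ha₂ with h2 | h2
      · exact absurd (h1.trans h2.symm) hsame
      · rw [this, h1, h2]; decide
      · rw [this, h1, h2]; decide
      · exact absurd (h1.trans h2.symm) hsame
    set n : ℕ := (a₂ - b).val with hn
    have hcast : ((n : ℕ) : ZMod q) = a₂ - b := by
      simp [hn, ZMod.natCast_val, ZMod.cast_id]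
    have hfn : f ((n : ℕ) : ZMod q) = 0 := by
      rw [hcast, map_sub, hfb, sub_self]
    refine ⟨(rotPerm q) ^ n * reflPerm q 1, ?_, ?_, ?_⟩
    · exact mul_mem (hrotclos n) (hreflclos 1)
    · intro c hc
      rw [Equiv.Perm.coe_mul, ← Sym2.map_map]
      exact hrot n hfn _ (hrefl 1 hf1 c hc)
    · rw [Equiv.Perm.coe_mul, ← Sym2.map_map, hreflmap, ← hbdef, hrotmap, hcast]
      have : b + (a₂ - b) = a₂ := by ring
      rw [this]
end

section
/- Let q ≡ 0 (mod 4) and j ≡ 2 (mod 4) with 2 ≤ j < q/2. In the standard even local corneration L = { {i, i+j} : i mod 4 ∈ {0, 3} } in Z_q, define a graph on L whose edges are as follows: each pair {c_{4i−1}, c_{4i}} is joined by a pairing edge, and c_{4i−1} is joined to c_{4i−1−(j−2)} while c_{4i} is joined to c_{4i+(j−2)}. Then this graph is connected if and only if gcd(q, j−2) = 4. -/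
/-- The local graph for the even standard corneration: vertices are corners `c_a`
(indexed by their first coordinate `a ∈ ℤ/qℤ`, with `a ≡ 0` or `3 (mod 4)`);
pairing edges join `c_{4i−1}` to `c_{4i}` (i.e. `a` with `a+1` for `a ≡ 3`),
and stepping edges join `c_{4i−1}` to `c_{4i−1−(j−2)}` and `c_{4i}` to `c_{4i+(j−2)}`. -/
def evenLocalSplitGraph (q j : ℕ) : SimpleGraph (ZMod q) :=
  SimpleGraph.fromRel (fun a b =>
    (a.val % 4 = 3 ∧ b = a + 1) ∨
    (a.val % 4 = 3 ∧ b = a - ((j - 2 : ℕ) : ZMod q)) ∨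
    (a.val % 4 = 0 ∧ b = a + ((j - 2 : ℕ) : ZMod q)))

/-- A function constant on edges is constant on connected components. -/
lemma reachable_constant {V α : Type*} {G : SimpleGraph V} (f : V → α)
    (h : ∀ a b, G.Adj a b → f a = f b) {x y : V} (hr : G.Reachable x y) : f x = f y := by
  obtain ⟨p⟩ := hr
  induction p with
  | nil => rfl
  | cons hadj _ ih => exact (h _ _ hadj).trans ih

/-- For `4 ∣ q` and `j ≡ 2 (mod 4)` with `2 ≤ j < q/2`, the graph on the standard even
local corneration (pairing edges `c_{4i−1} ~ c_{4i}` and stepping edges by `±(j−2)`)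
is connected — i.e. any two corners of the corneration are joined by a path — if and
only if `gcd(q, j−2) = 4`. -/
theorem even_local_split_connected_iff (q j : ℕ) (hq0 : 0 < q) (hq : 4 ∣ q)
    (hj : j % 4 = 2) (hj1 : 2 ≤ j) (hj2 : j < q / 2) :
    (∀ a b : ZMod q, (a.val % 4 = 0 ∨ a.val % 4 = 3) → (b.val % 4 = 0 ∨ b.val % 4 = 3) →
        (evenLocalSplitGraph q j).Reachable a b) ↔
      Nat.gcd q (j - 2) = 4 := by
  haveI : NeZero q := ⟨hq0.ne'⟩
  obtain ⟨k, hk⟩ := hq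
  have hq4 : (4 : ℕ) ∣ q := ⟨k, hk⟩
  have hq8 : 8 ≤ q := by omega
  have hq1 : 1 < q := by omega
  set d : ℕ := j - 2 with hd
  have hd4 : d % 4 = 0 := by omega
  set D : ZMod q := (d : ZMod q) with hD
  set G := evenLocalSplitGraph q j with hG
  -- basic val computations
  have hvadd : ∀ x y : ZMod q, (x + y).val % 4 = (x.val + y.val) % 4 := by
    intro x y
    rw [ZMod.val_add]
    exact Nat.mod_mod_of_dvd _ hq4
  have hDval : D.val % 4 = 0 := by
    rw [hD, ZMod.val_natCast, Nat.mod_mod_of_dvd _ hq4]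
    exact hd4
  have hone : (1 : ZMod q).val = 1 := by
    have h := ZMod.val_natCast (n := q) 1
    simpa [Nat.mod_eq_of_lt hq1] using h
  have adj_iff : ∀ a b : ZMod q, G.Adj a b ↔ a ≠ b ∧
      (((a.val % 4 = 3 ∧ b = a + 1) ∨ (a.val % 4 = 3 ∧ b = a - D) ∨
        (a.val % 4 = 0 ∧ b = a + D)) ∨
       ((b.val % 4 = 3 ∧ a = b + 1) ∨ (b.val % 4 = 3 ∧ a = b - D) ∨
        (b.val % 4 = 0 ∧ a = b + D))) := by
    intro a b
    rw [hG]
    simp only [evenLocalSplitGraph, SimpleGraph.fromRel_adj]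
    exact Iff.rfl
  have hne1 : ∀ a : ZMod q, a ≠ a + 1 := by
    intro a h
    have h0 : (1 : ZMod q) = 0 := left_eq_add.mp h
    have h1 := congrArg ZMod.val h0
    rw [hone, ZMod.val_zero] at h1
    exact one_ne_zero h1
  -- class computations
  have class_add_one : ∀ a : ZMod q, a.val % 4 = 3 → (a + 1).val % 4 = 0 := by
    intro a ha
    have h := hvadd a 1
    rw [hone] at h
    omega
  have class_sub_one : ∀ b : ZMod q, b.val % 4 = 0 → (b - 1).val % 4 = 3 := by
    intro b hb
    have h := hvadd (b - 1) 1
    rw [hone, sub_add_cancel] at h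
    omega
  have class_sub : ∀ a : ZMod q, a.val % 4 = 3 → (a - D).val % 4 = 3 := by
    intro a ha
    have h := hvadd (a - D) D
    rw [sub_add_cancel] at h
    omega
  have class_add : ∀ b : ZMod q, b.val % 4 = 0 → (b + D).val % 4 = 0 := by
    intro b hb
    have h := hvadd b D
    omega
  have class_sub0 : ∀ b : ZMod q, b.val % 4 = 0 → (b - D).val % 4 = 0 := by
    intro b hb
    have h := hvadd (b - D) D
    rw [sub_add_cancel] at h
    omega
  -- basic edges
  have adj_pair : ∀ a : ZMod q, a.val % 4 = 3 → G.Adj a (a + 1) := by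
    intro a ha
    rw [adj_iff]
    exact ⟨hne1 a, Or.inl (Or.inl ⟨ha, rfl⟩)⟩
  have reach_step0 : ∀ b : ZMod q, b.val % 4 = 0 → G.Reachable b (b + D) := by
    intro b hb
    by_cases h : b = b + D
    · rw [← h]
    · exact ((adj_iff _ _).mpr ⟨h, Or.inl (Or.inr (Or.inr ⟨hb, rfl⟩))⟩).reachable
  have reach_step3 : ∀ a : ZMod q, a.val % 4 = 3 → G.Reachable a (a - D) := by
    intro a ha
    by_cases h : a = a - D
    · rw [← h]
    · exact ((adj_iff _ _).mpr ⟨h, Or.inl (Or.inr (Or.inl ⟨ha, rfl⟩))⟩).reachable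
  have reach_pairdown : ∀ b : ZMod q, b.val % 4 = 0 → G.Reachable b (b - 1) := by
    intro b hb
    have h3 := class_sub_one b hb
    have h := (adj_pair (b - 1) h3).reachable
    rw [sub_add_cancel] at h
    exact h.symm
  have reach_down : ∀ b : ZMod q, b.val % 4 = 0 → G.Reachable b (b - D) := by
    intro b hb
    have h1 := reach_pairdown b hb
    have h3 := class_sub_one b hb
    have h2 := reach_step3 (b - 1) h3
    have h4 : (b - 1 - D).val % 4 = 3 := class_sub (b - 1) h3
    have h5 := (adj_pair (b - 1 - D) h4).reachable
    have he : b - 1 - D + 1 = b - D := by ring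
    rw [he] at h5
    exact (h1.trans h2).trans h5
  have reach_zsmul : ∀ b : ZMod q, b.val % 4 = 0 → ∀ t : ℤ,
      (b + t • D).val % 4 = 0 ∧ G.Reachable b (b + t • D) := by
    intro b hb t
    induction t using Int.induction_on with
    | zero =>
      rw [zero_smul, add_zero]
      exact ⟨hb, SimpleGraph.Reachable.refl b⟩
    | succ n ih =>
      obtain ⟨ih1, ih2⟩ := ih
      have he : b + ((n : ℤ) + 1) • D = (b + (n : ℤ) • D) + D := by
        rw [add_smul, one_smul]; ring
      rw [he]
      exact ⟨class_add _ ih1, ih2.trans (reach_step0 _ ih1)⟩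
    | pred n ih =>
      obtain ⟨ih1, ih2⟩ := ih
      have he : b + (-(n : ℤ) - 1) • D = (b + (-(n : ℤ)) • D) - D := by
        rw [sub_smul, one_smul]; ring
      rw [he]
      exact ⟨class_sub0 _ ih1, ih2.trans (reach_down _ ih1)⟩
  constructor
  · -- connected → gcd = 4
    intro H
    by_contra hg
    set g := Nat.gcd q d with hgd
    have hgq : g ∣ q := Nat.gcd_dvd_left q d
    have hgd2 : g ∣ d := Nat.gcd_dvd_right q d
    have hg4 : 4 ∣ g := Nat.dvd_gcd hq4 (Nat.dvd_of_mod_eq_zero hd4)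
    have hgpos : 0 < g := Nat.gcd_pos_of_pos_left _ hq0
    have hg8 : 8 ≤ g := by omega
    haveI : NeZero g := ⟨by omega⟩
    set ψ : ZMod q →+* ZMod g := ZMod.castHom hgq (ZMod g) with hψ
    set φ : ZMod q → ZMod g := fun a => ψ a + (if a.val % 4 = 3 then 1 else 0) with hφ
    have hψD : ψ D = 0 := by
      rw [hD, map_natCast]
      exact (ZMod.natCast_eq_zero_iff d g).mpr hgd2
    have hrel : ∀ a b : ZMod q,
        ((a.val % 4 = 3 ∧ b = a + 1) ∨ (a.val % 4 = 3 ∧ b = a - D) ∨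
          (a.val % 4 = 0 ∧ b = a + D)) → φ a = φ b := by
      intro a b hab
      rcases hab with ⟨ha, rfl⟩ | ⟨ha, rfl⟩ | ⟨ha, rfl⟩
      · have hb := class_add_one a ha
        simp [hφ, ha, hb, map_add, map_one]
      · have hb := class_sub a ha
        simp [hφ, ha, hb, map_sub, hψD]
      · have hb := class_add a ha
        simp [hφ, ha, hb, map_add, hψD]
    have hinv : ∀ a b : ZMod q, G.Adj a b → φ a = φ b := by
      intro a b hab
      rw [adj_iff] at hab
      rcases hab.2 with h | h
      · exact hrel a b h
      · exact (hrel b a h).symm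
    have h0c : (0 : ZMod q).val % 4 = 0 := by simp
    have hnum : (4 : ZMod q) = ((4 : ℕ) : ZMod q) := by push_cast; ring
    have h4v : (4 : ZMod q).val = 4 := by
      rw [hnum, ZMod.val_natCast, Nat.mod_eq_of_lt (by omega)]
    have h4c : (4 : ZMod q).val % 4 = 0 := by rw [h4v]
    have h04 := reachable_constant φ hinv (H 0 (4 : ZMod q) (Or.inl h0c) (Or.inl h4c))
    have e0 : φ 0 = 0 := by simp [hφ]
    have e4 : φ (4 : ZMod q) = (4 : ZMod g) := by
      simp [hφ, h4v, map_ofNat]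
    rw [e0, e4] at h04
    have h04' : ((4 : ℕ) : ZMod g) = 0 := by push_cast; exact h04.symm
    have hdvd : g ∣ 4 := (ZMod.natCast_eq_zero_iff 4 g).mp h04'
    have := Nat.le_of_dvd (by norm_num) hdvd
    omega
  · -- gcd = 4 → connected
    intro hg a b ha hb
    have key : ∀ x y : ZMod q, x.val % 4 = 0 → y.val % 4 = 0 → G.Reachable x y := by
      intro x y hx hy
      have hc : (y - x).val % 4 = 0 := by
        have h := hvadd (y - x) x
        rw [sub_add_cancel] at h
        omega
      obtain ⟨m, hm⟩ : 4 ∣ (y - x).val := Nat.dvd_of_mod_eq_zero hc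
      have hgcd : Int.gcd (q : ℤ) (d : ℤ) = 4 := by
        rw [Int.gcd_natCast_natCast]
        exact hg
      set B : ℤ := Int.gcdB (q : ℤ) (d : ℤ) with hB
      have h2 : (4 : ZMod q) = D * ((B : ℤ) : ZMod q) := by
        have h := Int.gcd_eq_gcd_ab (q : ℤ) (d : ℤ)
        rw [hgcd] at h
        have h3 := congrArg (fun z : ℤ => (z : ZMod q)) h
        push_cast at h3
        rw [ZMod.natCast_self] at h3
        rw [hD]
        push_cast
        linear_combination h3
      have hv : (((y - x).val : ℕ) : ZMod q) = y - x := by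
        rw [ZMod.natCast_val, ZMod.cast_id]
      have hyx : y - x = (4 : ZMod q) * ((m : ℕ) : ZMod q) := by
        rw [← hv, hm]
        push_cast
        ring
      set t : ℤ := B * (m : ℤ) with htdef
      have ht : x + t • D = y := by
        rw [zsmul_eq_mul, htdef]
        push_cast
        linear_combination -hyx - (m : ZMod q) * h2
      have hr := (reach_zsmul x hx t).2
      rwa [ht] at hr
    have norm : ∀ c : ZMod q, c.val % 4 = 0 ∨ c.val % 4 = 3 →
        ∃ c0 : ZMod q, c0.val % 4 = 0 ∧ G.Reachable c c0 := by
      intro c hc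
      rcases hc with h | h
      · exact ⟨c, h, SimpleGraph.Reachable.refl c⟩
      · exact ⟨c + 1, class_add_one c h, (adj_pair c h).reachable⟩
    obtain ⟨a0, ha0, hra⟩ := norm a ha
    obtain ⟨b0, hb0, hrb⟩ := norm b hb
    exact (hra.trans (key a0 b0 ha0 hb0)).trans hrb.symm
end

section
/- If a finite map M is face-reflexible with half-reflexible subgroup G ≤ Aut(M), then M is face-bipartite: the faces can be 2-colored so that adjacent faces receive different colors, and the two color classes are the two orbits of G on faces. -/
/-- Two flags lie in the same face iff some element of `⟨r₀, r₁⟩` maps one to the other. -/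
def SameFace {Ω : Type} (r0 r1 : Equiv.Perm Ω) (x y : Ω) : Prop :=
  ∃ h ∈ Subgroup.closure ({r0, r1} : Set (Equiv.Perm Ω)), h x = y

/-! The face group `⟨r₀, r₁⟩` preserves every `G`-orbit, by half-reflexivity, while `r₂`
commutes with `G` and so permutes the `G`-orbits. Hence a union of `G`-orbits that is closed
under `r₂` is invariant under the whole monodromy group `⟨r₀, r₁, r₂⟩`, and by connectivity it
is all of `Ω`. For the orbit of a flag `x` that contains `r₂ x` this would make `G` transitive on
flags; for `orbit x ∪ orbit (r₂ x)` it shows that these are the only orbits. Colouring a flag by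
whether it lies in the orbit of a fixed base flag therefore gives the bipartition. -/

open MulAction Pointwise

namespace Equiv.Perm

variable {α : Type*}

theorem apply_mem_iff_of_mem_closure {T : Set (Perm α)} {S : Set α}
    (hT : ∀ s ∈ T, ∀ x, s x ∈ S ↔ x ∈ S) {g : Perm α} (hg : g ∈ Subgroup.closure T) (x : α) :
    g x ∈ S ↔ x ∈ S := by
  have hstab : Subgroup.closure T ≤ stabilizer (Perm α) S := by
    refine (Subgroup.closure_le _).2 fun s hs => mem_stabilizer_iff.2 ?_
    ext y
    rw [Set.mem_smul_set_iff_inv_smul_mem, Perm.smul_def, ← hT s hs, Perm.inv_def, apply_symm_apply]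
  have h := Set.smul_mem_smul_set_iff (a := g) (x := x) (s := S)
  rwa [mem_stabilizer_iff.1 (hstab hg)] at h

theorem mem_of_closure_transitive {T : Set (Perm α)} {S : Set α}
    (htrans : ∀ x y, ∃ g ∈ Subgroup.closure T, g x = y)
    (hT : ∀ s ∈ T, ∀ x, s x ∈ S ↔ x ∈ S) {x : α} (hx : x ∈ S) (y : α) : y ∈ S := by
  obtain ⟨g, hg, rfl⟩ := htrans x y
  exact (apply_mem_iff_of_mem_closure hT hg x).2 hx

end Equiv.Perm

section Orbits

variable {Ω : Type*} {G : Subgroup (Equiv.Perm Ω)} {x y : Ω}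

theorem Subgroup.mem_orbit_perm_iff : y ∈ orbit G x ↔ ∃ g ∈ G, g x = y :=
  ⟨fun ⟨g, hg⟩ => ⟨g, g.2, hg⟩, fun ⟨g, hg, h⟩ => ⟨⟨g, hg⟩, h⟩⟩

theorem apply_mem_orbit_apply {r : Equiv.Perm Ω} (hr : ∀ g ∈ G, g * r = r * g)
    (h : y ∈ orbit G x) : r y ∈ orbit G (r x) := by
  obtain ⟨g, hg, rfl⟩ := Subgroup.mem_orbit_perm_iff.1 h
  exact Subgroup.mem_orbit_perm_iff.2 ⟨g, hg, DFunLike.congr_fun (hr g hg) x⟩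

theorem apply_mem_orbit_iff_of_involutive {r : Equiv.Perm Ω} (hr : ∀ g ∈ G, g * r = r * g)
    (hrr : Function.Involutive r) : r y ∈ orbit G x ↔ y ∈ orbit G (r x) := by
  refine ⟨fun h => ?_, fun h => ?_⟩
  · simpa only [hrr _] using apply_mem_orbit_apply hr h
  · simpa only [hrr _] using apply_mem_orbit_apply hr h

theorem apply_mem_orbit_iff_of_apply_mem_orbit_self {r : Ω → Ω} (hr : r y ∈ orbit G y) :
    r y ∈ orbit G x ↔ y ∈ orbit G x := by
  rw [← orbit_eq_iff, ← orbit_eq_iff, orbit_eq_iff.2 hr]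

theorem mem_orbit_iff_of_forall_mem_orbit_or {a b : Ω}
    (hab : ∀ z, z ∈ orbit G a ∨ z ∈ orbit G b) :
    (x ∈ orbit G a ↔ y ∈ orbit G a) ↔ y ∈ orbit G x := by
  have hab' : ∀ z, orbit G z = orbit G a ∨ orbit G z = orbit G b := by
    simpa only [← orbit_eq_iff] using hab
  simp only [← orbit_eq_iff]
  rcases hab' x with hx | hx <;> rcases hab' y with hy | hy <;> rw [hx, hy] <;> grind

end Orbits

section Map

variable {Ω : Type} {r0 r1 r2 : Equiv.Perm Ω} {G : Subgroup (Equiv.Perm Ω)}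

theorem apply_mem_orbit_iff_of_mem_closure_pair
    (hhalf : ∀ x y : Ω, SameFace r0 r1 x y → ∃ g ∈ G, g x = y) {h : Equiv.Perm Ω}
    (hh : h ∈ Subgroup.closure ({r0, r1} : Set (Equiv.Perm Ω))) {x y : Ω} :
    h y ∈ orbit G x ↔ y ∈ orbit G x :=
  apply_mem_orbit_iff_of_apply_mem_orbit_self
    (Subgroup.mem_orbit_perm_iff.2 (hhalf y (h y) ⟨h, hh, rfl⟩))

theorem biUnion_orbit_eq_univ
    (hconn : ∀ x y : Ω, ∃ g ∈ Subgroup.closure ({r0, r1, r2} : Set (Equiv.Perm Ω)), g x = y)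
    (hhalf : ∀ x y : Ω, SameFace r0 r1 x y → ∃ g ∈ G, g x = y) {A : Set Ω} (hA : A.Nonempty)
    (hr2 : ∀ y, r2 y ∈ ⋃ a ∈ A, orbit G a ↔ y ∈ ⋃ a ∈ A, orbit G a) :
    ⋃ a ∈ A, orbit G a = Set.univ := by
  obtain ⟨a, ha⟩ := hA
  refine Set.eq_univ_of_forall
    (Equiv.Perm.mem_of_closure_transitive hconn ?_ (Set.mem_biUnion ha (mem_orbit_self a)))
  have hface : ∀ s ∈ ({r0, r1} : Set (Equiv.Perm Ω)),
      ∀ y, s y ∈ ⋃ a ∈ A, orbit G a ↔ y ∈ ⋃ a ∈ A, orbit G a := fun s hs y => by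
    simp only [Set.mem_iUnion₂,
      apply_mem_orbit_iff_of_mem_closure_pair hhalf (Subgroup.subset_closure hs)]
  rintro s (rfl | rfl | rfl)
  · exact hface _ (by simp)
  · exact hface _ (by simp)
  · exact hr2

theorem mem_orbit_iff_exists_sameFace
    (hhalf : ∀ x y : Ω, SameFace r0 r1 x y → ∃ g ∈ G, g x = y) {x y : Ω} :
    y ∈ orbit G x ↔ ∃ g ∈ G, SameFace r0 r1 (g x) y := by
  refine ⟨fun h => ?_, fun ⟨g, hg, hxy⟩ => ?_⟩
  · obtain ⟨g, hg, rfl⟩ := Subgroup.mem_orbit_perm_iff.1 h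
    exact ⟨g, hg, 1, one_mem _, rfl⟩
  · rw [← orbit_eq_iff.2 (Subgroup.mem_orbit_perm_iff.2 ⟨g, hg, rfl⟩)]
    exact Subgroup.mem_orbit_perm_iff.2 (hhalf _ _ hxy)

theorem apply_notMem_orbit_self
    (hconn : ∀ x y : Ω, ∃ g ∈ Subgroup.closure ({r0, r1, r2} : Set (Equiv.Perm Ω)), g x = y)
    (hhalf : ∀ x y : Ω, SameFace r0 r1 x y → ∃ g ∈ G, g x = y)
    (hcomm : ∀ g ∈ G, g * r2 = r2 * g) (hr2 : Function.Involutive r2)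
    (hnotflag : ¬ ∀ x y : Ω, ∃ g ∈ G, g x = y) (x : Ω) : r2 x ∉ orbit G x := by
  intro hx
  have huniv : ∀ z, z ∈ orbit G x := by
    refine Set.eq_univ_iff_forall.1 ?_
    simpa only [Set.biUnion_singleton] using biUnion_orbit_eq_univ hconn hhalf
      (Set.singleton_nonempty x) fun y => by
        simp only [Set.biUnion_singleton, apply_mem_orbit_iff_of_involutive hcomm hr2,
          orbit_eq_iff.2 hx]
  refine hnotflag fun y z => Subgroup.mem_orbit_perm_iff.1 ?_
  rw [← orbit_eq_iff, orbit_eq_iff.2 (huniv z), orbit_eq_iff.2 (huniv y)]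

theorem mem_orbit_or_mem_orbit_apply
    (hconn : ∀ x y : Ω, ∃ g ∈ Subgroup.closure ({r0, r1, r2} : Set (Equiv.Perm Ω)), g x = y)
    (hhalf : ∀ x y : Ω, SameFace r0 r1 x y → ∃ g ∈ G, g x = y)
    (hcomm : ∀ g ∈ G, g * r2 = r2 * g) (hr2 : Function.Involutive r2) (x y : Ω) :
    y ∈ orbit G x ∨ y ∈ orbit G (r2 x) := by
  have huniv := biUnion_orbit_eq_univ hconn hhalf (Set.insert_nonempty x {r2 x}) fun z => by
    simp only [Set.biUnion_insert, Set.biUnion_singleton, Set.mem_union,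
      apply_mem_orbit_iff_of_involutive hcomm hr2, hr2 x]
    exact or_comm
  simpa only [Set.biUnion_insert, Set.biUnion_singleton, Set.mem_union] using
    Set.eq_univ_iff_forall.1 huniv y

end Map

theorem face_reflexible_implies_face_bipartite_general {Ω : Type}
    (r0 r1 r2 : Equiv.Perm Ω)
    (h2 : r2 * r2 = 1)
    (hconn : ∀ x y : Ω, ∃ g ∈ Subgroup.closure ({r0, r1, r2} : Set (Equiv.Perm Ω)), g x = y)
    (G : Subgroup (Equiv.Perm Ω))
    (hGaut : ∀ g ∈ G, g * r0 = r0 * g ∧ g * r1 = r1 * g ∧ g * r2 = r2 * g)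
    (hnotflag : ¬ ∀ x y : Ω, ∃ g ∈ G, g x = y)
    (hhalf : ∀ x y : Ω, SameFace r0 r1 x y → ∃ g ∈ G, g x = y) :
    ∃ c : Ω → Bool,
      (∀ x y : Ω, SameFace r0 r1 x y → c x = c y) ∧
      (∀ x : Ω, c (r2 x) ≠ c x) ∧
      (∀ x y : Ω, c x = c y ↔ ∃ g ∈ G, SameFace r0 r1 (g x) y) := by
  classical
  obtain ⟨x₀, -⟩ := not_forall.1 hnotflag
  have hr2 : Function.Involutive r2 := fun x => DFunLike.congr_fun h2 x
  have hcomm : ∀ g ∈ G, g * r2 = r2 * g := fun g hg => (hGaut g hg).2.2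
  have hcolor : ∀ x y, (x ∈ orbit G x₀ ↔ y ∈ orbit G x₀) ↔ y ∈ orbit G x := fun x y =>
    mem_orbit_iff_of_forall_mem_orbit_or (mem_orbit_or_mem_orbit_apply hconn hhalf hcomm hr2 x₀)
  refine ⟨fun x => decide (x ∈ orbit G x₀), fun x y hxy => ?_, fun x => ?_, fun x y => ?_⟩
  · rw [decide_eq_decide, hcolor]
    exact Subgroup.mem_orbit_perm_iff.2 (hhalf x y hxy)
  · rw [Ne, decide_eq_decide, hcolor, mem_orbit_symm]
    exact apply_notMem_orbit_self hconn hhalf hcomm hr2 hnotflag x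
  · rw [decide_eq_decide, hcolor, mem_orbit_iff_exists_sameFace hhalf]

/-- A finite map, given by its flag set `Ω` with the three adjacency involutions
`r₀, r₁, r₂`.  If `G` is a half-reflexible subgroup of `Aut(M)` (a group of symmetries,
i.e. permutations commuting with `r₀, r₁, r₂`, which is not transitive on flags but
whose face stabilizers are transitive on the flags of each face), then `M` is
face-bipartite: there is a 2-coloring of the faces (a `Bool`-coloring of flags
constant on faces) such that adjacent faces (faces across an edge, i.e. across `r₂`)
receive different colors, and the two color classes are the two orbits of `G` on
faces. -/
theorem face_reflexible_implies_face_bipartite {Ω : Type} [Fintype Ω] [Nonempty Ω]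
    (r0 r1 r2 : Equiv.Perm Ω)
    (h0 : r0 * r0 = 1) (h1 : r1 * r1 = 1) (h2 : r2 * r2 = 1)
    (h02 : r0 * r2 = r2 * r0)
    (hconn : ∀ x y : Ω, ∃ g ∈ Subgroup.closure ({r0, r1, r2} : Set (Equiv.Perm Ω)), g x = y)
    (G : Subgroup (Equiv.Perm Ω))
    (hGaut : ∀ g ∈ G, g * r0 = r0 * g ∧ g * r1 = r1 * g ∧ g * r2 = r2 * g)
    (hnotflag : ¬ ∀ x y : Ω, ∃ g ∈ G, g x = y)
    (hhalf : ∀ x y : Ω, SameFace r0 r1 x y → ∃ g ∈ G, g x = y) :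
    ∃ c : Ω → Bool,
      (∀ x y : Ω, SameFace r0 r1 x y → c x = c y) ∧
      (∀ x : Ω, c (r2 x) ≠ c x) ∧
      (∀ x y : Ω, c x = c y ↔ ∃ g ∈ G, SameFace r0 r1 (g x) y) :=
  face_reflexible_implies_face_bipartite_general r0 r1 r2 h2 hconn G hGaut hnotflag hhalf
end
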